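/- Let A be a finite action set, Q : A → ℝ a function, and B > 0. The softmax policy π(a) = exp(B·Q(a)) / Σ_{a'} exp(B·Q(a')) satisfies Σ_a π(a) Q(a) ≥ max_a Q(a) − (log |A|)/B. -/

import Mathlib

open Finset Real

/-! Writing `π = softmax f`, we have `log π i = f i - log ∑ exp f`, so the expected value
`∑ π f` equals `log ∑ exp f` minus the entropy of `π`. The log-sum-exp dominates every `f i`,
and by Jensen's inequality for the concave `negMulLog` the entropy is at most `log |A|`.
Applying this to `f = B • Q` and dividing by `B` gives the bound. -/

theorem sum_negMulLog_le_log_card {ι : Type*} [Fintype ι] [Nonempty ι] {p : ι → ℝ}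
    (hp0 : ∀ i, 0 ≤ p i) (hp1 : ∑ i, p i = 1) :
    ∑ i, negMulLog (p i) ≤ log (Fintype.card ι) := by
  set n : ℝ := (Fintype.card ι : ℝ)
  have hn : 0 < n := by positivity
  have jensen : ∑ i, n⁻¹ * negMulLog (p i) ≤ negMulLog (∑ i, n⁻¹ * p i) :=
    concaveOn_negMulLog.le_map_sum (fun _ _ => by positivity)
      (by simp [n, Finset.card_univ]) (fun i _ => hp0 i)
  rw [← mul_sum, ← mul_sum, hp1, mul_one, negMulLog, log_inv, neg_mul_neg] at jensen
  exact le_of_mul_le_mul_left jensen (inv_pos.2 hn)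

section Softmax

variable {ι : Type*} [Fintype ι]

noncomputable def softmax (f : ι → ℝ) (i : ι) : ℝ := exp (f i) / ∑ j, exp (f j)

theorem le_log_sum_exp (f : ι → ℝ) (i : ι) : f i ≤ log (∑ j, exp (f j)) := by
  rw [← log_exp (f i)]
  exact log_le_log (exp_pos _) (single_le_sum (fun j _ => (exp_pos (f j)).le) (mem_univ i))

variable [Nonempty ι]

theorem sum_exp_pos (f : ι → ℝ) : 0 < ∑ j, exp (f j) :=
  sum_pos (fun j _ => exp_pos (f j)) univ_nonempty

theorem softmax_pos (f : ι → ℝ) (i : ι) : 0 < softmax f i :=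
  div_pos (exp_pos _) (sum_exp_pos f)

theorem sum_softmax (f : ι → ℝ) : ∑ i, softmax f i = 1 := by
  simp only [softmax]
  rw [← sum_div, div_self (sum_exp_pos f).ne']

theorem log_softmax (f : ι → ℝ) (i : ι) : log (softmax f i) = f i - log (∑ j, exp (f j)) := by
  rw [softmax, log_div (exp_ne_zero _) (sum_exp_pos f).ne', log_exp]

theorem sum_softmax_mul_add_sum_negMulLog (f : ι → ℝ) :
    ∑ i, softmax f i * f i + ∑ i, negMulLog (softmax f i) = log (∑ j, exp (f j)) := by
  simp only [negMulLog, log_softmax, ← sum_add_distrib]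
  calc ∑ i, (softmax f i * f i + -softmax f i * (f i - log (∑ j, exp (f j))))
      = (∑ i, softmax f i) * log (∑ j, exp (f j)) := by
        rw [sum_mul]; exact sum_congr rfl fun i _ => by ring
    _ = log (∑ j, exp (f j)) := by rw [sum_softmax, one_mul]

theorem sub_log_card_le_sum_softmax_mul (f : ι → ℝ) (i : ι) :
    f i - log (Fintype.card ι) ≤ ∑ j, softmax f j * f j := by
  have entropy_le := sum_negMulLog_le_log_card (fun j => (softmax_pos f j).le) (sum_softmax f)
  linarith [sum_softmax_mul_add_sum_negMulLog f, le_log_sum_exp f i]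

end Softmax

/-- The softmax policy at inverse temperature B is nearly greedy:
Σ_a π(a) Q(a) ≥ max_a Q(a) − log|A| / B. -/
theorem stmt_8 {A : Type*} [Fintype A] [Nonempty A] (Q : A → ℝ) (B : ℝ) (hB : 0 < B) :
    (univ.sup' univ_nonempty fun a => Q a) - Real.log (Fintype.card A) / B
      ≤ ∑ a, (Real.exp (B * Q a) / ∑ a', Real.exp (B * Q a')) * Q a := by
  obtain ⟨a₀, -, hmax⟩ := exists_mem_eq_sup' univ_nonempty fun a => Q a
  have key := sub_log_card_le_sum_softmax_mul (fun a => B * Q a) a₀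
  have hscale : ∑ a, softmax (fun a => B * Q a) a * (B * Q a)
      = B * ∑ a, (exp (B * Q a) / ∑ a', exp (B * Q a')) * Q a := by
    rw [mul_sum]; exact sum_congr rfl fun a _ => by rw [softmax]; ring
  rw [hscale] at key
  rw [hmax, sub_div' hB.ne', div_le_iff₀ hB]
  linarith
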